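/- Fix integers m ≥ n ≥ 2. For every nonzero (t,a) ∈ ℝ×ℂ^{m−n} and every nonzero z ∈ ℂ, the following identity of (m+n)×(m+n) complex matrices holds: w_{L_{n−1}−L_n}(z) · w_{L_n}(t,a) · w_{L_{n−1}−L_n}(z)⁻¹ = w_{L_{n−1}}(t·|z|², z·a). -/

import Mathlib

noncomputable section

open Matrix

/-- The `N × N` complex matrix with `(k,l)` entry (1-based) equal to `1`
and all other entries `0`. -/
def EstdC (N k l : ℕ) : Matrix (Fin N) (Fin N) ℂ :=
  Matrix.of fun p q => if p.val + 1 = k ∧ q.val + 1 = l then 1 else 0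

/-- The squared Hermitian norm `|a|²` of `a ∈ ℂ^d`. -/
def hsq (d : ℕ) (a : Fin d → ℂ) : ℝ := ∑ j, Complex.normSq (a j)

/-- `x_{L_i−L_j}(z) = I + z·E_{i,j} − conj(z)·E_{j+n,i+n}`. -/
def xdiffC (m n i j : ℕ) (z : ℂ) : Matrix (Fin (m + n)) (Fin (m + n)) ℂ :=
  1 + z • EstdC (m + n) i j - star z • EstdC (m + n) (j + n) (i + n)

/-- `x_{L_i+L_j}(z) = I + z·E_{i,j+n} − conj(z)·E_{j,i+n}` (for `i < j`). -/
def xplusC (m n i j : ℕ) (z : ℂ) : Matrix (Fin (m + n)) (Fin (m + n)) ℂ :=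
  1 + z • EstdC (m + n) i (j + n) - star z • EstdC (m + n) j (i + n)

/-- `x_{−L_i−L_j}(z) = I + z·E_{j+n,i} − conj(z)·E_{i+n,j}` (for `i < j`). -/
def xnegplusC (m n i j : ℕ) (z : ℂ) : Matrix (Fin (m + n)) (Fin (m + n)) ℂ :=
  1 + z • EstdC (m + n) (j + n) i - star z • EstdC (m + n) (i + n) j

/-- `w_{L_i−L_j}(z) = x_{L_i−L_j}(z) x_{L_j−L_i}(−z⁻¹) x_{L_i−L_j}(z)`. -/
def wdiffC (m n i j : ℕ) (z : ℂ) : Matrix (Fin (m + n)) (Fin (m + n)) ℂ :=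
  xdiffC m n i j z * xdiffC m n j i (-z⁻¹) * xdiffC m n i j z

/-- `w_{L_i+L_j}(z) = x_{L_i+L_j}(z) x_{−L_i−L_j}(−z⁻¹) x_{L_i+L_j}(z)`. -/
def wplusC (m n i j : ℕ) (z : ℂ) : Matrix (Fin (m + n)) (Fin (m + n)) ℂ :=
  xplusC m n i j z * xnegplusC m n i j (-z⁻¹) * xplusC m n i j z

/-- `a₀ = −|a|²/2 + t·i`, for `(t,a) ∈ ℝ × ℂ^d`. -/
def azero (d : ℕ) (t : ℝ) (a : Fin d → ℂ) : ℂ :=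
  ((-(hsq d a) / 2 : ℝ) : ℂ) + (t : ℂ) * Complex.I

/-- `x_{L_i}(t,a) = I + Σ_j (a_j·E_{i,2n+j} − conj(a_j)·E_{2n+j,i+n}) + a₀·E_{i,i+n}`. -/
def xLC (m n i : ℕ) (t : ℝ) (a : Fin (m - n) → ℂ) :
    Matrix (Fin (m + n)) (Fin (m + n)) ℂ :=
  1 + (∑ j : Fin (m - n),
      (a j • EstdC (m + n) i (2 * n + (j.val + 1)) -
        star (a j) • EstdC (m + n) (2 * n + (j.val + 1)) (i + n))) +
    azero (m - n) t a • EstdC (m + n) i (i + n)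

/-- `x_{−L_i}(t,a) = I + Σ_j (a_j·E_{i+n,2n+j} − conj(a_j)·E_{2n+j,i}) + a₀·E_{i+n,i}`. -/
def xnegLC (m n i : ℕ) (t : ℝ) (a : Fin (m - n) → ℂ) :
    Matrix (Fin (m + n)) (Fin (m + n)) ℂ :=
  1 + (∑ j : Fin (m - n),
      (a j • EstdC (m + n) (i + n) (2 * n + (j.val + 1)) -
        star (a j) • EstdC (m + n) (2 * n + (j.val + 1)) i)) +
    azero (m - n) t a • EstdC (m + n) (i + n) i

/-- `w_{L_i}(t,a) = x_{L_i}(t,a) · x_{−L_i}(t/|a₀|², −a₀⁻¹a) · x_{L_i}(t, (conj a₀/a₀)a)`. -/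
def wLC (m n i : ℕ) (t : ℝ) (a : Fin (m - n) → ℂ) :
    Matrix (Fin (m + n)) (Fin (m + n)) ℂ :=
  xLC m n i t a *
    xnegLC m n i (t / Complex.normSq (azero (m - n) t a))
      ((-(azero (m - n) t a)⁻¹) • a) *
    xLC m n i t ((star (azero (m - n) t a) / azero (m - n) t a) • a)

/-!
`w_{L_{n−1}−L_n}(z)` is a monomial matrix: it exchanges `e_{n−1} ↔ e_n` and `e_{2n−1} ↔ e_{2n}`
with the scalars `−z⁻¹, z, −conj z, (conj z)⁻¹` and fixes every other basis vector. Conjugation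
by a monomial matrix `P`, `P e_k = c_k e_{σ k}`, sends `E_{k,l}` to `(c_k / c_l) E_{σ k, σ l}`.
Hence conjugation by `w_{L_{n−1}−L_n}(z)` sends `x_{L_n}(s, b)` to `x_{L_{n−1}}(s|z|², z b)` and
`x_{−L_n}(s, b)` to `x_{−L_{n−1}}(s/|z|², (conj z)⁻¹ b)`, because `a₀(s|w|², w b) = |w|² a₀(s, b)`.
Applied to the three factors of `w_{L_n}(t, a)`, these rescaled parameters are exactly those of
the three factors of `w_{L_{n−1}}(t|z|², z a)`.
-/

section MonomialMatrix

variable {ι R : Type*} [Fintype ι] [DecidableEq ι]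

def monomialMatrix [Zero R] (σ : Equiv.Perm ι) (c : ι → R) : Matrix ι ι R :=
  of fun i j => if i = σ j then c j else 0

section CommSemiring
variable [CommSemiring R] (σ : Equiv.Perm ι) (c : ι → R)

theorem monomialMatrix_mul_single (p q : ι) (x : R) :
    monomialMatrix σ c * single p q x = single (σ p) q (c p * x) := by
  ext i j
  obtain rfl | hj := eq_or_ne j q
  · simp [monomialMatrix, single_apply, eq_comm]
  · simp [hj, Ne.symm hj]

theorem single_mul_monomialMatrix (p q : ι) (x : R) :
    single p q x * monomialMatrix σ c = single p (σ.symm q) (x * c (σ.symm q)) := by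
  ext i j
  obtain rfl | hi := eq_or_ne i p
  · simp only [single_mul_apply_same, monomialMatrix, of_apply, single_apply, true_and,
      Equiv.symm_apply_eq, mul_ite, mul_zero]
    split_ifs <;> simp_all
  · simp [hi, Ne.symm hi]

theorem monomialMatrix_mul_monomialMatrix (τ : Equiv.Perm ι) (d : ι → R) :
    monomialMatrix σ c * monomialMatrix τ d = monomialMatrix (σ * τ) (fun j => c (τ j) * d j) := by
  ext i j
  simp [monomialMatrix, mul_apply]
  -- the two sides differ only in the `Decidable` instance of the `if`
  rfl

omit [Fintype ι] in
theorem monomialMatrix_one_one : monomialMatrix (1 : Equiv.Perm ι) (1 : ι → R) = 1 := by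
  ext i j
  rfl

end CommSemiring

section Field
variable [Field R] {σ : Equiv.Perm ι} {c : ι → R}

theorem isUnit_det_monomialMatrix (hc : ∀ j, c j ≠ 0) : IsUnit (monomialMatrix σ c).det := by
  refine isUnit_det_of_right_inverse (B := monomialMatrix σ⁻¹ fun j => (c (σ⁻¹ j))⁻¹) ?_
  rw [monomialMatrix_mul_monomialMatrix, mul_inv_cancel, ← monomialMatrix_one_one]
  congr
  funext j
  simp [hc]

theorem monomialMatrix_mul_single_eq_single_mul {q : ι} (hq : c q ≠ 0) (p : ι) (x : R) :
    monomialMatrix σ c * single p q x =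
      single (σ p) (σ q) (c p * x / c q) * monomialMatrix σ c := by
  rw [monomialMatrix_mul_single, single_mul_monomialMatrix, Equiv.symm_apply_apply,
    div_mul_cancel₀ _ hq]

end Field
end MonomialMatrix

section RootMatrix

variable {ι κ R : Type*} [Fintype ι] [DecidableEq ι] [Fintype κ] [Field R] [StarRing R]

/-- `rootMatrix u v τ c₀ b` is `x_{L_i}(t, b)` with `c₀ = a₀(t, b)` when `u, v` index `e_i, e_{i+n}`
and `τ` indexes the last `m − n` basis vectors; `x_{−L_i}(t, b)` is then `rootMatrix v u τ c₀ b`. -/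
def rootMatrix (u v : ι) (τ : κ → ι) (c₀ : R) (b : κ → R) : Matrix ι ι R :=
  1 + ∑ j, (single u (τ j) (b j) - single (τ j) v (star (b j))) + single u v c₀

theorem semiconjBy_monomialMatrix_rootMatrix {σ : Equiv.Perm ι} {c : ι → R} {u v : ι}
    {τ : κ → ι} (hστ : ∀ j, σ (τ j) = τ j) (hcτ : ∀ j, c (τ j) = 1)
    (huv : c v * star (c u) = 1) (c₀ : R) (b : κ → R) :
    SemiconjBy (monomialMatrix σ c) (rootMatrix u v τ c₀ b)
      (rootMatrix (σ u) (σ v) τ (c u * star (c u) * c₀) (c u • b)) := by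
  unfold SemiconjBy
  have hv : c v ≠ 0 := left_ne_zero_of_mul_eq_one huv
  have hτ : ∀ j, c (τ j) ≠ 0 := fun j => by simp [hcτ]
  simp only [rootMatrix, mul_add, add_mul, mul_one, one_mul, Finset.mul_sum, Finset.sum_mul,
    mul_sub, sub_mul, monomialMatrix_mul_single_eq_single_mul hv,
    monomialMatrix_mul_single_eq_single_mul (hτ _), hστ, hcτ]
  simp only [div_eq_mul_inv, (eq_inv_of_mul_eq_one_right huv).symm, inv_one, mul_one,
    Pi.smul_apply, smul_eq_mul, star_mul', mul_comm (star (b _)), mul_right_comm (c u) c₀]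

end RootMatrix

section Weyl

variable {ι R : Type*} [Fintype ι] [DecidableEq ι] [Field R] [StarRing R]

/-- `x_{L_i−L_j}(z)` when `p, q, p', q'` index `e_i, e_j, e_{i+n}, e_{j+n}`. -/
def xDiff (p q p' q' : ι) (z : R) : Matrix ι ι R :=
  1 + single p q z - single q' p' (star z)

def wDiff (p q p' q' : ι) (z : R) : Matrix ι ι R :=
  xDiff p q p' q' z * xDiff q p q' p' (-z⁻¹) * xDiff p q p' q' z

def weylCoeff (p q p' q' : ι) (z : R) (k : ι) : R :=
  if k = p then -z⁻¹ else if k = q then z else if k = p' then -star z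
    else if k = q' then (star z)⁻¹ else 1

theorem wDiff_eq_monomialMatrix {p q p' q' : ι} (hpq : p ≠ q) (hpp' : p ≠ p') (hpq' : p ≠ q')
    (hqp' : q ≠ p') (hqq' : q ≠ q') (hp'q' : p' ≠ q') {z : R} (hz : z ≠ 0) :
    wDiff p q p' q' z =
      monomialMatrix (Equiv.swap p q * Equiv.swap p' q') (weylCoeff p q p' q' z) := by
  have hz' : star z ≠ 0 := star_ne_zero.2 hz
  simp only [wDiff, xDiff, star_neg, star_inv₀, mul_add, add_mul, mul_sub, sub_mul, one_mul,
    mul_one, single_mul_single_same, single_mul_single_of_ne, hpq.symm, hpp'.symm, hpq',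
    hpq'.symm, hqp', hqp'.symm, hqq', hp'q', ne_eq, not_false_eq_true, sub_zero, add_zero]
  ext i j
  simp only [monomialMatrix, weylCoeff, of_apply, Matrix.add_apply, Matrix.sub_apply, one_apply,
    single_apply, Equiv.Perm.mul_apply, Equiv.swap_apply_def]
  grind

end Weyl

theorem hsq_smul (d : ℕ) (w : ℂ) (a : Fin d → ℂ) :
    hsq d (w • a) = Complex.normSq w * hsq d a := by
  simp only [hsq, Pi.smul_apply, smul_eq_mul, Complex.normSq_mul, Finset.mul_sum]

theorem azero_smul (d : ℕ) (t : ℝ) (a : Fin d → ℂ) (w : ℂ) :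
    azero d (t * Complex.normSq w) (w • a) = w * star w * azero d t a := by
  rw [Complex.star_def, Complex.mul_conj, azero, azero, hsq_smul]
  push_cast
  ring

section WRoot

variable {ι : Type*} [Fintype ι] [DecidableEq ι] {d : ℕ}

def wRoot (u v : ι) (τ : Fin d → ι) (t : ℝ) (a : Fin d → ℂ) : Matrix ι ι ℂ :=
  rootMatrix u v τ (azero d t a) a *
    rootMatrix v u τ (azero d (t / Complex.normSq (azero d t a)) (-(azero d t a)⁻¹ • a))
      (-(azero d t a)⁻¹ • a) *
    rootMatrix u v τ (azero d t ((star (azero d t a) / azero d t a) • a))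
      ((star (azero d t a) / azero d t a) • a)

theorem semiconjBy_monomialMatrix_wRoot {σ : Equiv.Perm ι} {c : ι → ℂ} {u v : ι}
    {τ : Fin d → ι} (hστ : ∀ j, σ (τ j) = τ j) (hcτ : ∀ j, c (τ j) = 1) (huv : c v * star (c u) = 1)
    (t : ℝ) (a : Fin d → ℂ) :
    SemiconjBy (monomialMatrix σ c) (wRoot u v τ t a)
      (wRoot (σ u) (σ v) τ (t * Complex.normSq (c u)) (c u • a)) := by
  have hvu : c u * star (c v) = 1 := by simpa [mul_comm] using congrArg star huv
  have hu : c u ≠ 0 := left_ne_zero_of_mul_eq_one hvu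
  have hv : c v = (star (c u))⁻¹ := eq_inv_of_mul_eq_one_left huv
  set α := azero d t a
  have hsu : star (c u) ≠ 0 := star_ne_zero.2 hu
  have hmid : -(c u * star (c u) * α)⁻¹ • c u • a = c v • (-α⁻¹ • a) := by
    rw [hv, smul_smul, smul_smul]
    congr 1
    field_simp
  have hmid_t : t * Complex.normSq (c u) / Complex.normSq (c u * star (c u) * α) =
      t / Complex.normSq α * Complex.normSq (c v) := by
    rw [hv]
    simp only [map_mul, map_inv₀, Complex.star_def, Complex.normSq_conj]
    have : Complex.normSq (c u) ≠ 0 := (Complex.normSq_pos.2 hu).ne'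
    field_simp
  have hlast : (star (c u * star (c u) * α) / (c u * star (c u) * α)) • c u • a =
      c u • (star α / α) • a := by
    rw [smul_smul, smul_smul]
    congr 1
    simp only [star_mul', star_star]
    by_cases hα : α = 0
    · simp [hα]
    · field_simp
  rw [wRoot, wRoot, azero_smul, hmid, hmid_t, azero_smul, hlast, azero_smul]
  exact ((semiconjBy_monomialMatrix_rootMatrix hστ hcτ huv _ _).mul_right
    (semiconjBy_monomialMatrix_rootMatrix hστ hcτ hvu _ _)).mul_right
    (semiconjBy_monomialMatrix_rootMatrix hστ hcτ huv _ _)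

end WRoot

section Conjugation

variable {ι : Type*} [Fintype ι] [DecidableEq ι] {d : ℕ} {p q p' q' : ι} {τ : Fin d → ι}

theorem wDiff_mul_wRoot_mul_inv (hpq : p ≠ q) (hpp' : p ≠ p') (hpq' : p ≠ q') (hqp' : q ≠ p')
    (hqq' : q ≠ q') (hp'q' : p' ≠ q') (hτp : ∀ j, τ j ≠ p) (hτq : ∀ j, τ j ≠ q)
    (hτp' : ∀ j, τ j ≠ p') (hτq' : ∀ j, τ j ≠ q') {z : ℂ} (hz : z ≠ 0) (t : ℝ) (a : Fin d → ℂ) :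
    wDiff p q p' q' z * wRoot q q' τ t a * (wDiff p q p' q' z)⁻¹ =
      wRoot p p' τ (t * Complex.normSq z) (z • a) := by
  have hc : ∀ k, weylCoeff p q p' q' z k ≠ 0 := fun k => by
    unfold weylCoeff; split_ifs <;> simp [hz]
  have hστ : ∀ j, (Equiv.swap p q * Equiv.swap p' q') (τ j) = τ j := fun j => by
    simp [Equiv.swap_apply_of_ne_of_ne, hτp, hτq, hτp', hτq']
  have hcτ : ∀ j, weylCoeff p q p' q' z (τ j) = 1 := fun j => by
    simp [weylCoeff, hτp, hτq, hτp', hτq']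
  have hcq : weylCoeff p q p' q' z q = z := by simp [weylCoeff, hpq.symm]
  have hcq' : weylCoeff p q p' q' z q' = (star z)⁻¹ := by
    simp [weylCoeff, hpq'.symm, hqq'.symm, hp'q'.symm]
  have huv : weylCoeff p q p' q' z q' * star (weylCoeff p q p' q' z q) = 1 := by
    rw [hcq, hcq', inv_mul_cancel₀ (star_ne_zero.2 hz)]
  rw [wDiff_eq_monomialMatrix hpq hpp' hpq' hqp' hqq' hp'q' hz,
    (semiconjBy_monomialMatrix_wRoot hστ hcτ huv t a).eq,
    mul_nonsing_inv_cancel_right _ _ (isUnit_det_monomialMatrix hc), hcq, Equiv.Perm.mul_apply,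
    Equiv.Perm.mul_apply, Equiv.swap_apply_of_ne_of_ne hqp' hqq', Equiv.swap_apply_right,
    Equiv.swap_apply_right, Equiv.swap_apply_of_ne_of_ne hpp'.symm hqp'.symm]

end Conjugation

section Indices

theorem smul_EstdC {N k l : ℕ} {P Q : Fin N} (hP : P.val + 1 = k) (hQ : Q.val + 1 = l) (x : ℂ) :
    x • EstdC N k l = single P Q x := by
  subst hP hQ
  ext p q
  simp [EstdC, single_apply, Fin.ext_iff, eq_comm]

variable {m n : ℕ}

theorem wdiffC_eq_wDiff {i j : ℕ} {P Q P' Q' : Fin (m + n)} (hP : P.val + 1 = i)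
    (hQ : Q.val + 1 = j) (hP' : P'.val + 1 = i + n) (hQ' : Q'.val + 1 = j + n) (z : ℂ) :
    wdiffC m n i j z = wDiff P Q P' Q' z := by
  simp only [wdiffC, xdiffC, wDiff, xDiff, smul_EstdC hP hQ, smul_EstdC hQ hP,
    smul_EstdC hQ' hP', smul_EstdC hP' hQ']

variable {i : ℕ} {u v : Fin (m + n)} {τ : Fin (m - n) → Fin (m + n)}

theorem xLC_eq_rootMatrix (hu : u.val + 1 = i) (hv : v.val + 1 = i + n)
    (hτ : ∀ j, (τ j).val + 1 = 2 * n + (j.val + 1)) (t : ℝ) (a : Fin (m - n) → ℂ) :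
    xLC m n i t a = rootMatrix u v τ (azero (m - n) t a) a := by
  simp only [xLC, rootMatrix, smul_EstdC hu (hτ _), smul_EstdC (hτ _) hv, smul_EstdC hu hv]

theorem xnegLC_eq_rootMatrix (hu : u.val + 1 = i) (hv : v.val + 1 = i + n)
    (hτ : ∀ j, (τ j).val + 1 = 2 * n + (j.val + 1)) (t : ℝ) (a : Fin (m - n) → ℂ) :
    xnegLC m n i t a = rootMatrix v u τ (azero (m - n) t a) a := by
  simp only [xnegLC, rootMatrix, smul_EstdC hv (hτ _), smul_EstdC (hτ _) hu, smul_EstdC hv hu]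

theorem wLC_eq_wRoot (hu : u.val + 1 = i) (hv : v.val + 1 = i + n)
    (hτ : ∀ j, (τ j).val + 1 = 2 * n + (j.val + 1)) (t : ℝ) (a : Fin (m - n) → ℂ) :
    wLC m n i t a = wRoot u v τ t a := by
  simp only [wLC, wRoot, xLC_eq_rootMatrix hu hv hτ, xnegLC_eq_rootMatrix hu hv hτ]

end Indices

theorem wdiffC_conj_wLC_general (m n : ℕ) (hmn : n ≤ m) (hn : 2 ≤ n)
    (t : ℝ) (a : Fin (m - n) → ℂ)
    (z : ℂ) (hz : z ≠ 0) :
    wdiffC m n (n - 1) n z * wLC m n n t a * (wdiffC m n (n - 1) n z)⁻¹ =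
      wLC m n (n - 1) (t * Complex.normSq z) (z • a) := by
  let p : Fin (m + n) := ⟨n - 2, by omega⟩
  let q : Fin (m + n) := ⟨n - 1, by omega⟩
  let p' : Fin (m + n) := ⟨2 * n - 2, by omega⟩
  let q' : Fin (m + n) := ⟨2 * n - 1, by omega⟩
  let τ : Fin (m - n) → Fin (m + n) := fun j => ⟨2 * n + j, by omega⟩
  have hτ : ∀ j, (τ j).val + 1 = 2 * n + (j.val + 1) := fun j => rfl
  have hτ_ne {k : Fin (m + n)} (hk : k.val < 2 * n) (j : Fin (m - n)) : τ j ≠ k :=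
    fun h => by have := congrArg Fin.val h; simp [τ] at this; omega
  rw [wdiffC_eq_wDiff (P := p) (Q := q) (P' := p') (Q' := q') (by simp [p]; omega)
      (by simp [q]; omega) (by simp [p']; omega) (by simp [q']; omega),
    wLC_eq_wRoot (u := q) (v := q') (by simp [q]; omega) (by simp [q']; omega) hτ,
    wLC_eq_wRoot (u := p) (v := p') (by simp [p]; omega) (by simp [p']; omega) hτ]
  exact wDiff_mul_wRoot_mul_inv (Fin.ne_of_val_ne (by simp [p, q]; omega))
    (Fin.ne_of_val_ne (by simp [p, p']; omega)) (Fin.ne_of_val_ne (by simp [p, q']; omega))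
    (Fin.ne_of_val_ne (by simp [q, p']; omega)) (Fin.ne_of_val_ne (by simp [q, q']; omega))
    (Fin.ne_of_val_ne (by simp [p', q']; omega)) (hτ_ne (by simp [p]; omega))
    (hτ_ne (by simp [q]; omega)) (hτ_ne (by simp [p']; omega)) (hτ_ne (by simp [q']; omega))
    hz t a

/-- **Item 5 of Lemma 7.10 of the paper, in `SU(m,n)`**:
`w_{L_{n−1}−L_n}(z) · w_{L_n}(t,a) · w_{L_{n−1}−L_n}(z)⁻¹ = w_{L_{n−1}}(t|z|², z·a)`. -/
theorem wdiffC_conj_wLC (m n : ℕ) (hmn : n ≤ m) (hn : 2 ≤ n)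
    (t : ℝ) (a : Fin (m - n) → ℂ) (hta : ¬(t = 0 ∧ a = 0))
    (z : ℂ) (hz : z ≠ 0) :
    wdiffC m n (n - 1) n z * wLC m n n t a * (wdiffC m n (n - 1) n z)⁻¹ =
      wLC m n (n - 1) (t * Complex.normSq z) (z • a) :=
  wdiffC_conj_wLC_general m n hmn hn t a z hz
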